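/- arXiv:math/0307263 — 5 statements merged into one kernel-verified Lean document; each statement's English description precedes it below -/
import Mathlib

section
/- In a category internal to Vect (a 2-vector space), composition is determined by the other structure maps: for composable morphisms f : x → y and g : y → z, the composite is f∘g = f + g - i(y), where i is the identity-assigning map. Equivalently, writing each morphism as its source plus its 'arrow part' f̄ = f - i(s(f)), composition is given by (x, f̄)∘(y, ḡ) = (x, f̄ + ḡ). -/
/-- A 2-vector space: a category internal to `Vect` over a field `k`.
Composition is given as a partially-defined operation on composable pairs,
required to be linear (additive and homogeneous on composable pairs). -/
structure TwoVect (k : Type) [Field k] (V0 V1 : Type)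
    [AddCommGroup V0] [Module k V0] [AddCommGroup V1] [Module k V1] where
  s : V1 →ₗ[k] V0
  t : V1 →ₗ[k] V0
  i : V0 →ₗ[k] V1
  s_i : ∀ x, s (i x) = x
  t_i : ∀ x, t (i x) = x
  comp : ∀ f g : V1, t f = s g → V1
  comp_add : ∀ f g f' g' (h : t f = s g) (h' : t f' = s g')
      (h'' : t (f + f') = s (g + g')),
      comp (f + f') (g + g') h'' = comp f g h + comp f' g' h'
  comp_smul : ∀ (c : k) (f g : V1) (h : t f = s g) (h' : t (c • f) = s (c • g)),
      comp (c • f) (c • g) h' = c • comp f g h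
  s_comp : ∀ f g (h : t f = s g), s (comp f g h) = s f
  t_comp : ∀ f g (h : t f = s g), t (comp f g h) = t g
  id_comp : ∀ f (h : t (i (s f)) = s f), comp (i (s f)) f h = f
  comp_id : ∀ f (h : t f = s (i (t f))), comp f (i (t f)) h = f
  assoc : ∀ f g e (hfg : t f = s g) (hge : t g = s e)
      (h1 : t (comp f g hfg) = s e) (h2 : t f = s (comp g e hge)),
      comp (comp f g hfg) e h1 = comp f (comp g e hge) h2

/-!
Composition is linear on composable pairs, and the pairs `(f, g)` and `(i y, i y)` add up to the
same pair as `(f, i y)` and `(i y, g)`, where `y = t f`. Hence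
`f ∘ g + i y ∘ i y = f ∘ i y + i y ∘ g`, and the unit laws turn this into `f ∘ g + i y = f + g`.
-/

namespace TwoVect

variable {k : Type} [Field k] {V0 V1 : Type} [AddCommGroup V0] [Module k V0]
  [AddCommGroup V1] [Module k V1] (V : TwoVect k V0 V1)

theorem comp_congr {f f' g g' : V1} (hf : f = f') (hg : g = g') (h : V.t f = V.s g)
    (h' : V.t f' = V.s g') : V.comp f g h = V.comp f' g' h' := by
  subst hf hg
  rfl

theorem comp_i (f : V1) (y : V0) (h : V.t f = V.s (V.i y)) : V.comp f (V.i y) h = f := by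
  obtain rfl : y = V.t f := by rw [h, V.s_i]
  exact V.comp_id f h

theorem i_comp (y : V0) (g : V1) (h : V.t (V.i y) = V.s g) : V.comp (V.i y) g h = g := by
  obtain rfl : y = V.s g := by rw [← h, V.t_i]
  exact V.id_comp g h

theorem comp_eq_add_sub_i (f g : V1) (h : V.t f = V.s g) :
    V.comp f g h = f + g - V.i (V.t f) := by
  have hii : V.t (V.i (V.t f)) = V.s (V.i (V.t f)) := by rw [V.t_i, V.s_i]
  have hfi : V.t f = V.s (V.i (V.t f)) := by rw [V.s_i]
  have hig : V.t (V.i (V.t f)) = V.s g := by rw [V.t_i, h]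
  have interchange :
      V.comp f g h + V.comp (V.i (V.t f)) (V.i (V.t f)) hii = f + g :=
    calc V.comp f g h + V.comp (V.i (V.t f)) (V.i (V.t f)) hii
        = V.comp (f + V.i (V.t f)) (g + V.i (V.t f)) (by simp [V.t_i, V.s_i, h]) :=
          (V.comp_add _ _ _ _ _ _ _).symm
      _ = V.comp (f + V.i (V.t f)) (V.i (V.t f) + g) (by simp [V.t_i, V.s_i, h]) :=
          V.comp_congr rfl (add_comm _ _) _ _
      _ = V.comp f (V.i (V.t f)) hfi + V.comp (V.i (V.t f)) g hig :=
          V.comp_add _ _ _ _ _ _ _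
      _ = f + g := by rw [comp_i, i_comp]
  rw [comp_i] at interchange
  exact eq_sub_of_add_eq interchange

/-- The arrow part `f̄` of `f`. -/
def arrow (f : V1) : V1 := f - V.i (V.s f)

theorem arrow_comp (f g : V1) (h : V.t f = V.s g) :
    V.arrow (V.comp f g h) = V.arrow f + V.arrow g := by
  rw [arrow, arrow, arrow, V.s_comp, V.comp_eq_add_sub_i, ← h]
  abel

end TwoVect

/-- In a category internal to `Vect`, composition is determined by the
remaining structure maps: `f ∘ g = f + g - i(y)` for `f : x → y`, `g : y → z`;
equivalently, the source of the composite is `x` and its arrow part is the sum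
of the arrow parts `f̄ + ḡ`. -/
theorem composition_determined (k : Type) [Field k] (V0 V1 : Type)
    [AddCommGroup V0] [Module k V0] [AddCommGroup V1] [Module k V1]
    (V : TwoVect k V0 V1) (f g : V1) (h : V.t f = V.s g) :
    V.comp f g h = f + g - V.i (V.t f) ∧
    V.s (V.comp f g h) = V.s f ∧
    V.comp f g h - V.i (V.s (V.comp f g h)) =
      (f - V.i (V.s f)) + (g - V.i (V.s g)) :=
  ⟨V.comp_eq_add_sub_i f g h, V.s_comp f g h, V.arrow_comp f g h⟩
end

section
/- Chain homotopies between chain maps of 2-term complexes correspond to internal natural transformations between the corresponding linear functors of 2-vector spaces: given chain maps φ,ψ : C → C' and a linear map τ : C₀ → C₁' satisfying d'∘τ = ψ₀ - φ₀ and τ∘d = ψ₁ - φ₁, the assignment x ↦ (φ₀(x), τ(x)) is a natural transformation in Vect from T(φ) to T(ψ), where T is the functor sending 2-term complexes to 2-vector spaces. -/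
/-- A chain homotopy `τ` between chain maps `φ, ψ : C → C'` of 2-term chain
complexes yields an internal natural transformation `θ : x ↦ (φ₀ x, τ x)`
between the corresponding linear functors `T(φ), T(ψ)` of 2-vector spaces.
Here `T` sends `d : C₁ → C₀` to the 2-vector space with objects `C₀`,
morphisms `C₀ × C₁`, `s (x, f̄) = x`, `t (x, f̄) = x + d f̄`, `i x = (x, 0)`,
composition adding arrow parts; `T(φ)` acts by `φ₀` on objects and `φ₀ × φ₁`
on morphisms.  Being a natural transformation means: the source of `θ x` is
`T(φ)` applied to `x`, its target is `T(ψ)` applied to `x`, and for every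
morphism `p = (x, f̄)` the naturality square commutes, i.e.
`θ (s p) ∘ T(ψ)(p) = T(φ)(p) ∘ θ (t p)` (composition adds arrow parts). -/
theorem chain_homotopy_gives_natural_transformation
    (k : Type) [Field k] (C0 C1 C0' C1' : Type)
    [AddCommGroup C0] [Module k C0] [AddCommGroup C1] [Module k C1]
    [AddCommGroup C0'] [Module k C0'] [AddCommGroup C1'] [Module k C1']
    (d : C1 →ₗ[k] C0) (d' : C1' →ₗ[k] C0')
    (φ0 ψ0 : C0 →ₗ[k] C0') (φ1 ψ1 : C1 →ₗ[k] C1')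
    (hφ : ∀ h : C1, d' (φ1 h) = φ0 (d h))
    (hψ : ∀ h : C1, d' (ψ1 h) = ψ0 (d h))
    (τ : C0 →ₗ[k] C1')
    (hτ0 : ∀ x : C0, d' (τ x) = ψ0 x - φ0 x)
    (hτ1 : ∀ h : C1, τ (d h) = ψ1 h - φ1 h) :
    let θ : C0 → C0' × C1' := fun x => (φ0 x, τ x)
    -- source of θ x is T(φ) on objects:
    (∀ x : C0, (θ x).1 = φ0 x) ∧
    -- target of θ x is T(ψ) on objects:
    (∀ x : C0, (θ x).1 + d' ((θ x).2) = ψ0 x) ∧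
    -- naturality square: θ(s p) ∘ T(ψ)(p) = T(φ)(p) ∘ θ(t p):
    (∀ p : C0 × C1,
      ((θ p.1).1, (θ p.1).2 + ψ1 p.2) =
      ((φ0 p.1, φ1 p.2).1, (φ0 p.1, φ1 p.2).2 + (θ (p.1 + d p.2)).2)) := by
  intro θ
  refine ⟨fun x => rfl, fun x => by simp [θ, hτ0 x], fun p => ?_⟩
  simp only [θ, Prod.mk.injEq, map_add, hτ1 p.2]
  constructor
  · trivial
  · abel
end

section
/- Let L be a vector space with a skew-symmetric bilinear operation [·,·] : L × L → L, let L' = k ⊕ L, and define B : L' ⊗ L' → L' ⊗ L' by B((a,x) ⊗ (b,y)) = (b,y) ⊗ (a,x) + (1,0) ⊗ (0,[x,y]). Then B satisfies the Yang–Baxter equation (B⊗1)(1⊗B)(B⊗1) = (1⊗B)(B⊗1)(1⊗B) on L' ⊗ L' ⊗ L' if and only if [·,·] satisfies the Jacobi identity [[x,y],z] = [[x,z],y] + [x,[y,z]] for all x,y,z ∈ L. -/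
open TensorProduct

/-- Projection `((a,x) ⊗ (b,y)) ⊗ (c,z) ↦ a • b • z`, used to extract the
Jacobi defect from the Yang–Baxter equation. -/
noncomputable def phi3 (k : Type) [Field k] (L : Type) [AddCommGroup L] [Module k L] :
    ((k × L) ⊗[k] (k × L)) ⊗[k] (k × L) →ₗ[k] L :=
  TensorProduct.lift (TensorProduct.lift
    ((LinearMap.fst k k L).smulRight
      ((LinearMap.fst k k L).smulRight (LinearMap.snd k k L))))

lemma phi3_tmul (k : Type) [Field k] (L : Type) [AddCommGroup L] [Module k L]
    (a b c : k × L) :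
    phi3 k L ((a ⊗ₜ[k] b) ⊗ₜ[k] c) = a.1 • b.1 • c.2 := by
  simp [phi3]

/-- Let `L` be a vector space with a skew-symmetric bilinear bracket, let
`L' = k ⊕ L`, and let `B : L' ⊗ L' → L' ⊗ L'` be the linear map determined on
pure tensors by `B((a,x) ⊗ (b,y)) = (b,y) ⊗ (a,x) + (1,0) ⊗ (0,[x,y])`.
Then `B` satisfies the Yang–Baxter equation
`(B ⊗ 1)(1 ⊗ B)(B ⊗ 1) = (1 ⊗ B)(B ⊗ 1)(1 ⊗ B)` if and only if the bracket
satisfies the Jacobi identity `[[x,y],z] = [[x,z],y] + [x,[y,z]]`. -/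
theorem yang_baxter_iff_jacobi
    (k : Type) [Field k] (L : Type) [AddCommGroup L] [Module k L]
    (br : L →ₗ[k] L →ₗ[k] L) (hskew : ∀ x y, br x y = - br y x)
    (B : (k × L) ⊗[k] (k × L) →ₗ[k] (k × L) ⊗[k] (k × L))
    (hB : ∀ p q : k × L,
      B (p ⊗ₜ[k] q) = q ⊗ₜ[k] p + ((1 : k), (0 : L)) ⊗ₜ[k] ((0 : k), br p.2 q.2)) :
    -- `B ⊗ 1` and `1 ⊗ B` on `(L' ⊗ L') ⊗ L'`, transporting `1 ⊗ B`
    -- through the associator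
    let B1 := LinearMap.rTensor (k × L) B
    let assoc := TensorProduct.assoc k (k × L) (k × L) (k × L)
    let B23 := (assoc.symm.toLinearMap) ∘ₗ
      (LinearMap.lTensor (k × L) B) ∘ₗ assoc.toLinearMap
    (B1 ∘ₗ B23 ∘ₗ B1 = B23 ∘ₗ B1 ∘ₗ B23) ↔
      (∀ x y z : L, br (br x y) z = br (br x z) y + br x (br y z)) := by
  intro B1 assoc B23
  set e : k × L := ((1:k), (0:L)) with he
  have hB1 : ∀ a b c : k × L, B1 ((a ⊗ₜ[k] b) ⊗ₜ[k] c)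
      = (b ⊗ₜ[k] a) ⊗ₜ[k] c + (e ⊗ₜ[k] (((0:k), br a.2 b.2) : k × L)) ⊗ₜ[k] c := by
    intro a b c
    simp [B1, LinearMap.rTensor_tmul, hB, add_tmul, he]
  have hB23 : ∀ a b c : k × L, B23 ((a ⊗ₜ[k] b) ⊗ₜ[k] c)
      = (a ⊗ₜ[k] c) ⊗ₜ[k] b + (a ⊗ₜ[k] e) ⊗ₜ[k] (((0:k), br b.2 c.2) : k × L) := by
    intro a b c
    simp [B23, assoc, hB, tmul_add, he]
  have hz : ∀ v : L, (((0:k), v) : k × L).2 = v := fun _ => rfl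
  have hez : (e : k × L).2 = 0 := rfl
  have hL : ∀ p q r : k × L,
      (B1 ∘ₗ B23 ∘ₗ B1) ((p ⊗ₜ[k] q) ⊗ₜ[k] r) =
        (r ⊗ₜ[k] q) ⊗ₜ[k] p
        + (e ⊗ₜ[k] (((0:k), br q.2 r.2) : k × L)) ⊗ₜ[k] p
        + (e ⊗ₜ[k] q) ⊗ₜ[k] (((0:k), br p.2 r.2) : k × L)
        + (r ⊗ₜ[k] e) ⊗ₜ[k] (((0:k), br p.2 q.2) : k × L)
        + (e ⊗ₜ[k] e) ⊗ₜ[k] (((0:k), br (br p.2 q.2) r.2) : k × L) := by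
    intro p q r
    simp only [LinearMap.comp_apply, hB1, hB23, map_add, hz, hez, map_zero,
      LinearMap.zero_apply, Prod.mk_zero_zero, tmul_zero, zero_tmul, add_zero]
    abel
  have hR : ∀ p q r : k × L,
      (B23 ∘ₗ B1 ∘ₗ B23) ((p ⊗ₜ[k] q) ⊗ₜ[k] r) =
        (r ⊗ₜ[k] q) ⊗ₜ[k] p
        + (r ⊗ₜ[k] e) ⊗ₜ[k] (((0:k), br p.2 q.2) : k × L)
        + (e ⊗ₜ[k] q) ⊗ₜ[k] (((0:k), br p.2 r.2) : k × L)
        + (e ⊗ₜ[k] e) ⊗ₜ[k] (((0:k), br (br p.2 r.2) q.2) : k × L)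
        + (e ⊗ₜ[k] (((0:k), br q.2 r.2) : k × L)) ⊗ₜ[k] p
        + (e ⊗ₜ[k] e) ⊗ₜ[k] (((0:k), br p.2 (br q.2 r.2)) : k × L) := by
    intro p q r
    simp only [LinearMap.comp_apply, hB1, hB23, map_add, hz, hez, map_zero,
      LinearMap.zero_apply, Prod.mk_zero_zero, tmul_zero, zero_tmul, add_zero]
    abel
  constructor
  · intro h x y z
    have h' := congrArg (fun F => phi3 k L
        (F (((((0:k), x) : k × L) ⊗ₜ[k] (((0:k), y) : k × L)) ⊗ₜ[k] (((0:k), z) : k × L)))) h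
    simp only [hL, hR, map_add, phi3_tmul, he] at h'
    simpa using h'
  · intro hJ
    apply TensorProduct.ext_threefold
    intro p q r
    rw [hL, hR, hJ p.2 q.2 r.2]
    have hsplit : ((((0:k), br (br p.2 r.2) q.2 + br p.2 (br q.2 r.2))) : k × L)
        = (((0:k), br (br p.2 r.2) q.2) : k × L) + (((0:k), br p.2 (br q.2 r.2)) : k × L) := by
      simp [Prod.ext_iff]
    rw [hsplit, tmul_add]
    abel
end

section
/- Let V be a 2-term L∞-algebra and L = T(V) the associated 2-vector space (objects V₀, morphisms V₀ ⊕ V₁, s(x,f̄) = x, t(x,f̄) = x + d f̄). Define the bracket of morphisms f : x → y, g : a → b by [f,g] = ([x,a], l₂(f̄,a) + l₂(y,ḡ)). Then this bracket preserves identities ([1ₓ,1_y] = 1_{[x,y]}) and composition ([f f', g g'] = [f,g][f',g'] for composable pairs), i.e., it is a functor L × L → L. -/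
/-- A 2-term L∞-algebra, presented via its concrete data (Lemma 4.3.3 of
Baez–Crans): vector spaces `V0`, `V1`, a differential `d : V1 → V0`, a bracket
`l2` (with mixed-degree component `l2'`, where `l2' x h = [x, h]` and
`[h, x] = - l2' x h`; the bracket of two 1-chains vanishes), and a totally
antisymmetric trilinear map `l3`, satisfying the identities coming from the
generalized Jacobi identities of an L∞-algebra. -/
structure TwoTermLinfty (k : Type) [Field k] (V0 V1 : Type)
    [AddCommGroup V0] [Module k V0] [AddCommGroup V1] [Module k V1] where
  d : V1 →ₗ[k] V0
  l2 : V0 →ₗ[k] V0 →ₗ[k] V0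
  l2' : V0 →ₗ[k] V1 →ₗ[k] V1
  l3 : V0 →ₗ[k] V0 →ₗ[k] V0 →ₗ[k] V1
  skew : ∀ x y, l2 x y = - l2 y x
  l3_antisymm_swap12 : ∀ x y z, l3 x y z = - l3 y x z
  l3_antisymm_swap23 : ∀ x y z, l3 x y z = - l3 x z y
  ax_e : ∀ x h, d (l2' x h) = l2 x (d h)
  ax_f : ∀ h k, l2' (d h) k = - l2' (d k) h
  ax_g : ∀ x y z, d (l3 x y z) = - l2 (l2 x y) z + l2 (l2 x z) y + l2 x (l2 y z)
  ax_h : ∀ h x y, l3 (d h) x y =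
    - l2' (l2 x y) h - l2' y (l2' x h) + l2' x (l2' y h)
  ax_i : ∀ w x y z,
    - l2' z (l3 w x y) - l2' x (l3 w y z)
      + l3 (l2 w y) x z + l3 (l2 x z) w y =
    - l2' y (l3 w x z) - l2' w (l3 x y z)
      + l3 (l2 w x) y z + l3 (l2 w z) x y
      + l3 (l2 x y) w z + l3 (l2 y z) w x

/-- In the 2-vector space `L = T(V)` associated to a 2-term L∞-algebra `V`
(objects `V0`, morphisms `V0 × V1` recorded as (source, arrow part), with
`t (x, f̄) = x + d f̄` and composition adding arrow parts), the bracket of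
morphisms `[f, g] = ([x, a], l₂(f̄, a) + l₂(y, ḡ))` preserves identities and
composition, i.e. it defines a functor `L × L → L`. -/
theorem bracket_is_functorial
    (k : Type) [Field k] (V0 V1 : Type)
    [AddCommGroup V0] [Module k V0] [AddCommGroup V1] [Module k V1]
    (V : TwoTermLinfty k V0 V1) :
    -- bracket of morphisms f = (x, f̄), g = (a, ḡ):
    -- [f,g] = ([x,a], l₂(f̄,a) + l₂(y,ḡ)) with y = x + d f̄,
    -- where l₂(f̄,a) = -l₂'(a, f̄)
    let br : V0 × V1 → V0 × V1 → V0 × V1 := fun f g =>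
      (V.l2 f.1 g.1, - V.l2' g.1 f.2 + V.l2' (f.1 + V.d f.2) g.2)
    -- composition of morphisms adds arrow parts
    let cmp : V0 × V1 → V0 × V1 → V0 × V1 := fun f f' => (f.1, f.2 + f'.2)
    -- identity morphisms are those with zero arrow part:
    -- the bracket preserves identities
    (∀ x y : V0, br (x, 0) (y, 0) = (V.l2 x y, 0)) ∧
    -- the bracket preserves composition of composable pairs
    (∀ f f' g g' : V0 × V1,
      f'.1 = f.1 + V.d f.2 → g'.1 = g.1 + V.d g.2 →
      br (cmp f f') (cmp g g') = cmp (br f g) (br f' g')) := by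
  refine ⟨fun x y => by simp, ?_⟩
  intro f f' g g' hf hg
  simp only [Prod.ext_iff, hf, hg, map_add, LinearMap.add_apply]
  constructor
  · trivial
  · have h := V.ax_f g.2 f'.2
    simp only [h]
    abel
end

section
/- Let V be a 2-term L∞-algebra. The morphism J_{x,y,z} := ([[x,y],z], l₃(x,y,z)) in the associated 2-vector space has source [[x,y],z] and target [x,[y,z]] + [[x,z],y], and is natural in z: for any morphism f : z → z' one has l₃(x,y,z') + l₂([x,y], f̄) = l₂(l₂(x,f̄), y) + l₂(x, l₂(y,f̄)) + l₃(x,y,z). -/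
/-- In the 2-vector space associated to a 2-term L∞-algebra, the morphism
`J_{x,y,z} = ([[x,y],z], l₃(x,y,z))` has source `[[x,y],z]`, target
`[x,[y,z]] + [[x,z],y]` (the target of a morphism `(u, h)` is `u + d h`),
and is natural in `z`: for any morphism `f : z → z'` (so `z' = z + d f̄`),
`l₃(x,y,z') + l₂([x,y], f̄) = l₂(l₂(x,f̄), y) + l₂(x, l₂(y,f̄)) + l₃(x,y,z)`,
where `l₂(h, y) = -l₂'(y, h)` for a 1-chain `h` and 0-chain `y`. -/
theorem jacobiator_source_target_natural
    (k : Type) [Field k] (V0 V1 : Type)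
    [AddCommGroup V0] [Module k V0] [AddCommGroup V1] [Module k V1]
    (V : TwoTermLinfty k V0 V1) :
    let J : V0 → V0 → V0 → V0 × V1 := fun x y z =>
      (V.l2 (V.l2 x y) z, V.l3 x y z)
    -- source
    (∀ x y z : V0, (J x y z).1 = V.l2 (V.l2 x y) z) ∧
    -- target
    (∀ x y z : V0, (J x y z).1 + V.d ((J x y z).2) =
      V.l2 x (V.l2 y z) + V.l2 (V.l2 x z) y) ∧
    -- naturality in the third variable
    (∀ (x y z : V0) (fbar : V1),
      V.l3 x y (z + V.d fbar) + V.l2' (V.l2 x y) fbar =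
      - V.l2' y (V.l2' x fbar) + V.l2' x (V.l2' y fbar) + V.l3 x y z) := by
  intro J
  refine ⟨fun x y z => rfl, fun x y z => ?_, fun x y z fbar => ?_⟩
  · simp only [J, V.ax_g]; abel
  · have h1 : V.l3 x y (V.d fbar) = V.l3 (V.d fbar) x y := by
      rw [V.l3_antisymm_swap23, V.l3_antisymm_swap12 x (V.d fbar) y]; abel
    simp only [map_add, h1, V.ax_h]
    abel
end
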